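/- arXiv:2407.08688 — 11 statements merged into one kernel-verified Lean document; each statement's English description precedes it below -/
import Mathlib

section
/- Let C be an idempotent grove category and let C?(X) ⊆ C(X,X) be a family of linear morphisms. Then C?(X) forms a Boolean algebra under composition (;) as conjunction and nondeterministic sum (+) as disjunction, with top id and bottom 0, if and only if for every b in C?(X) there exists b̄ in C?(X) with b;b̄ = 0 and b + b̄ = id. -/
open CategoryTheory CategoryTheory.Limits

/-- An idempotent grove category: hom-sets carry a bounded join-semilattice
structure `(gzero, gadd)` such that composition is strict and distributes
over `gadd` on the left argument. -/
class Grove (C : Type*) [Category C] where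
  gzero : ∀ (X Y : C), X ⟶ Y
  gadd : ∀ {X Y : C}, (X ⟶ Y) → (X ⟶ Y) → (X ⟶ Y)
  gadd_comm : ∀ {X Y : C} (p q : X ⟶ Y), gadd p q = gadd q p
  gadd_assoc : ∀ {X Y : C} (p q r : X ⟶ Y), gadd (gadd p q) r = gadd p (gadd q r)
  gadd_idem : ∀ {X Y : C} (p : X ⟶ Y), gadd p p = p
  gzero_add : ∀ {X Y : C} (p : X ⟶ Y), gadd (gzero X Y) p = p
  gzero_comp : ∀ {X Y Z : C} (p : Y ⟶ Z), gzero X Y ≫ p = gzero X Z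
  gadd_comp : ∀ {X Y Z : C} (q r : X ⟶ Y) (p : Y ⟶ Z),
    (gadd q r) ≫ p = gadd (q ≫ p) (r ≫ p)

/-- A morphism is linear if it is strict and distributes over `gadd`
on the right. -/
def Linear {C : Type*} [Category C] [Grove C] {X Y : C} (p : X ⟶ Y) : Prop :=
  (∀ Z : C, p ≫ Grove.gzero Y Z = Grove.gzero X Z) ∧
  (∀ (Z : C) (q r : Y ⟶ Z), p ≫ Grove.gadd q r = Grove.gadd (p ≫ q) (p ≫ r))


/-- The family `T` forms Boolean algebras under `≫` (as conjunction) and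
`gadd` (as disjunction), with top `𝟙` and bottom `gzero`: the composition
side is a meet-semilattice, the two structures satisfy absorption and
distributivity, and every element is complemented. (The `gadd`-side lattice
laws already hold in any idempotent grove category.) -/
structure IsBooleanTests {C : Type*} [Category C] [Grove C]
    (T : ∀ X : C, Set (X ⟶ X)) : Prop where
  comp_comm : ∀ {X : C} (b c : X ⟶ X), b ∈ T X → c ∈ T X → b ≫ c = c ≫ b
  comp_idem : ∀ {X : C} (b : X ⟶ X), b ∈ T X → b ≫ b = b
  absorb_add : ∀ {X : C} (b c : X ⟶ X), b ∈ T X → c ∈ T X →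
    Grove.gadd b (b ≫ c) = b
  absorb_comp : ∀ {X : C} (b c : X ⟶ X), b ∈ T X → c ∈ T X →
    b ≫ Grove.gadd b c = b
  distrib : ∀ {X : C} (a b c : X ⟶ X), a ∈ T X → b ∈ T X → c ∈ T X →
    Grove.gadd a (b ≫ c) = Grove.gadd a b ≫ Grove.gadd a c
  compl : ∀ {X : C} (b : X ⟶ X), b ∈ T X →
    ∃ b' ∈ T X, b ≫ b' = Grove.gzero X X ∧ Grove.gadd b b' = 𝟙 X

/-- A family of linear endomorphisms (containing `0` and `𝟙` and closed under
`≫` and `gadd`) forms Boolean algebras under `≫` as conjunction and `gadd` as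
disjunction, with top `𝟙` and bottom `0`, if and only if every member `b` has
a member `b̄` satisfying contradiction (`b;b̄ = 0`) and excluded middle
(`b + b̄ = id`). -/
theorem tests_boolean_iff_compl {C : Type*} [Category C] [Grove C]
    (T : ∀ X : C, Set (X ⟶ X))
    (hlin : ∀ (X : C) (b : X ⟶ X), b ∈ T X → Linear b)
    (hzero : ∀ X : C, Grove.gzero X X ∈ T X)
    (hid : ∀ X : C, 𝟙 X ∈ T X)
    (hcomp : ∀ (X : C) (b c : X ⟶ X), b ∈ T X → c ∈ T X → b ≫ c ∈ T X)
    (hadd : ∀ (X : C) (b c : X ⟶ X), b ∈ T X → c ∈ T X → Grove.gadd b c ∈ T X) :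
    IsBooleanTests T ↔
      ∀ (X : C) (b : X ⟶ X), b ∈ T X →
        ∃ b' ∈ T X, b ≫ b' = Grove.gzero X X ∧ Grove.gadd b b' = 𝟙 X := by
  constructor
  · intro hB X b hb
    exact hB.compl b hb
  · intro H
    -- antisymmetry of the ≤ induced by gadd
    have anti : ∀ {X : C} (p q : X ⟶ X),
        Grove.gadd p q = q → Grove.gadd q p = p → p = q := by
      intro X p q h1 h2
      rw [← h2, Grove.gadd_comm, h1]
    -- every test is below the identity
    have top : ∀ (X : C) (b : X ⟶ X), b ∈ T X →
        Grove.gadd b (𝟙 X) = 𝟙 X := by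
      intro X b hb
      obtain ⟨b', _, _, h1⟩ := H X b hb
      rw [← h1, ← Grove.gadd_assoc, Grove.gadd_idem]
    -- idempotency of composition
    have idem : ∀ (X : C) (b : X ⟶ X), b ∈ T X → b ≫ b = b := by
      intro X b hb
      obtain ⟨b', _, h0, h1⟩ := H X b hb
      have : b = b ≫ b := by
        calc b = b ≫ 𝟙 X := (Category.comp_id b).symm
        _ = b ≫ Grove.gadd b b' := by rw [h1]
        _ = Grove.gadd (b ≫ b) (b ≫ b') := (hlin X b hb).2 X b b'
        _ = Grove.gadd (b ≫ b) (Grove.gzero X X) := by rw [h0]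
        _ = b ≫ b := by rw [Grove.gadd_comm, Grove.gzero_add]
      exact this.symm
    -- b ≫ c ≤ c
    have le1 : ∀ (X : C) (b c : X ⟶ X), b ∈ T X →
        Grove.gadd (b ≫ c) c = c := by
      intro X b c hb
      calc Grove.gadd (b ≫ c) c = Grove.gadd (b ≫ c) (𝟙 X ≫ c) := by
            rw [Category.id_comp]
      _ = Grove.gadd b (𝟙 X) ≫ c := (Grove.gadd_comp b (𝟙 X) c).symm
      _ = c := by rw [top X b hb, Category.id_comp]
    -- b ≫ c ≤ b
    have le2 : ∀ (X : C) (b c : X ⟶ X), b ∈ T X → c ∈ T X →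
        Grove.gadd (b ≫ c) b = b := by
      intro X b c hb hc
      calc Grove.gadd (b ≫ c) b = Grove.gadd (b ≫ c) (b ≫ 𝟙 X) := by
            rw [Category.comp_id]
      _ = b ≫ Grove.gadd c (𝟙 X) := ((hlin X b hb).2 X c (𝟙 X)).symm
      _ = b := by rw [top X c hc, Category.comp_id]
    -- b ≫ c is the meet: any test below b and c is below b ≫ c
    have le_meet : ∀ (X : C) (e b c : X ⟶ X), e ∈ T X → b ∈ T X →
        Grove.gadd e b = b → Grove.gadd e c = c →
        Grove.gadd e (b ≫ c) = b ≫ c := by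
      intro X e b c he hb heb hec
      have h1 : Grove.gadd (e ≫ e) (b ≫ e) = b ≫ e := by
        rw [← Grove.gadd_comp, heb]
      have h2 : Grove.gadd (b ≫ e) (b ≫ c) = b ≫ c := by
        rw [← (hlin X b hb).2, hec]
      calc Grove.gadd e (b ≫ c) = Grove.gadd (e ≫ e) (b ≫ c) := by
            rw [idem X e he]
      _ = Grove.gadd (e ≫ e) (Grove.gadd (b ≫ e) (b ≫ c)) := by rw [h2]
      _ = Grove.gadd (Grove.gadd (e ≫ e) (b ≫ e)) (b ≫ c) :=
            (Grove.gadd_assoc _ _ _).symm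
      _ = Grove.gadd (b ≫ e) (b ≫ c) := by rw [h1]
      _ = b ≫ c := h2
    -- commutativity of composition on tests
    have ccomm : ∀ {X : C} (b c : X ⟶ X), b ∈ T X → c ∈ T X →
        b ≫ c = c ≫ b := by
      intro X b c hb hc
      have h1 : Grove.gadd (c ≫ b) (b ≫ c) = b ≫ c :=
        le_meet X (c ≫ b) b c (hcomp X c b hc hb) hb
          (le1 X c b hc) (le2 X c b hc hb)
      have h2 : Grove.gadd (b ≫ c) (c ≫ b) = c ≫ b :=
        le_meet X (b ≫ c) c b (hcomp X b c hb hc) hc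
          (le1 X b c hb) (le2 X b c hb hc)
      exact (anti _ _ h1 h2).symm
    refine ⟨ccomm, fun {X} b hb => idem X b hb, ?_, ?_, ?_, fun {X} b hb => H X b hb⟩
    · -- absorb_add
      intro X b c hb hc
      rw [Grove.gadd_comm]
      exact le2 X b c hb hc
    · -- absorb_comp
      intro X b c hb hc
      rw [(hlin X b hb).2 X b c, idem X b hb, Grove.gadd_comm]
      exact le2 X b c hb hc
    · -- distrib
      intro X a b c ha hb hc
      have habs : a ≫ Grove.gadd a c = a := by
        rw [(hlin X a ha).2 X a c, idem X a ha, Grove.gadd_comm]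
        exact le2 X a c ha hc
      symm
      calc Grove.gadd a b ≫ Grove.gadd a c
          = Grove.gadd (a ≫ Grove.gadd a c) (b ≫ Grove.gadd a c) :=
            Grove.gadd_comp _ _ _
      _ = Grove.gadd a (Grove.gadd (b ≫ a) (b ≫ c)) := by
            rw [habs, (hlin X b hb).2 X a c]
      _ = Grove.gadd (Grove.gadd a (b ≫ a)) (b ≫ c) :=
            (Grove.gadd_assoc _ _ _).symm
      _ = Grove.gadd a (b ≫ c) := by
            rw [Grove.gadd_comm a (b ≫ a), le1 X b a hb]
end

section
/- If b and c are linear elements of an idempotent grove monoid, each having a complement (b̄ with b;b̄ = 0, b+b̄ = id, and similarly c̄), then b and c commute: b;c = c;b. -/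
/-- In an idempotent grove monoid (a monoid with bounded join-semilattice
`(0,+)`, `0*p = 0`, `(q+r)*p = q*p + r*p`), any two linear complemented
elements commute: `b*c = c*b`. A complement of `b` is `b̄` with
`b*b̄ = 0`, `b̄*b = 0`, and `b + b̄ = 1`. -/
theorem tests_comm {S : Type*} [Monoid S] [AddCommMonoid S]
    (hadd_idem : ∀ a : S, a + a = a)
    (hzero_mul : ∀ p : S, (0 : S) * p = 0)
    (hadd_mul : ∀ q r p : S, (q + r) * p = q * p + r * p)
    (b bb c cc : S)
    (hb_strict : b * 0 = 0)
    (hb_dist : ∀ q r : S, b * (q + r) = b * q + b * r)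
    (hc_strict : c * 0 = 0)
    (hc_dist : ∀ q r : S, c * (q + r) = c * q + c * r)
    (hb_contra : b * bb = 0) (hb_contra' : bb * b = 0) (hb_em : b + bb = 1)
    (hc_contra : c * cc = 0) (hc_contra' : cc * c = 0) (hc_em : c + cc = 1) :
    b * c = c * b := by
  -- b ≤ 1 and c ≤ 1
  have hb1 : b + 1 = 1 := by rw [← hb_em, ← add_assoc, hadd_idem]
  have hc1 : c + 1 = 1 := by rw [← hc_em, ← add_assoc, hadd_idem]
  -- b*c ≤ b, c*b ≤ c
  have hbc_b : b * c + b = b := by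
    have := congrArg (fun x => b * x) hc1
    simpa [hb_dist, mul_one] using this
  have hcb_c : c * b + c = c := by
    have := congrArg (fun x => c * x) hb1
    simpa [hc_dist, mul_one] using this
  -- b*c*bb = 0, c*b*cc = 0
  have hbcbb : b * c * bb = 0 := by
    have := congrArg (fun x => x * bb) hbc_b
    simpa [hadd_mul, hb_contra] using this
  have hcbcc : c * b * cc = 0 := by
    have := congrArg (fun x => x * cc) hcb_c
    simpa [hadd_mul, hc_contra] using this
  -- b*c = b*c*b, c*b = c*b*c
  have h1 : b * c = b * c * b := by
    calc b * c = b * (c * (b + bb)) := by rw [hb_em, mul_one]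
    _ = b * (c * b + c * bb) := by rw [hc_dist]
    _ = b * (c * b) + b * (c * bb) := by rw [hb_dist]
    _ = b * c * b + b * c * bb := by rw [mul_assoc, mul_assoc]
    _ = b * c * b := by rw [hbcbb, add_zero]
  have h2 : c * b = c * b * c := by
    calc c * b = c * (b * (c + cc)) := by rw [hc_em, mul_one]
    _ = c * (b * c + b * cc) := by rw [hb_dist]
    _ = c * (b * c) + c * (b * cc) := by rw [hc_dist]
    _ = c * b * c + c * b * cc := by rw [mul_assoc, mul_assoc]
    _ = c * b * c := by rw [hcbcc, add_zero]
  -- b*c ≤ c, c*b ≤ b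
  have hbc_c : b * c + c = c := by
    have := congrArg (fun x => x * c) hb1
    simpa [hadd_mul, one_mul] using this
  have hcb_b : c * b + b = b := by
    have := congrArg (fun x => x * b) hc1
    simpa [hadd_mul, one_mul] using this
  -- b*c + c*b = c*b and c*b + b*c = b*c
  have h3 : b * c + c * b = c * b := by
    have := congrArg (fun x => x * b) hbc_c
    simpa [hadd_mul, ← h1] using this
  have h4 : c * b + b * c = b * c := by
    have := congrArg (fun x => x * c) hcb_b
    simpa [hadd_mul, ← h2] using this
  rw [← h4, add_comm, h3]
end

section
/- A category C is a Kleene-Kozen category if and only if the pair (C,C) (taking every morphism as tame) is a ⋆-idempotent Kleene-iteration category; in particular, from the KiC axioms together with id⋆ = id and linearity of all morphisms one can derive that q;p⋆ is the least pre-fixpoint of x ↦ q + x;p and p⋆;r is the least pre-fixpoint of x ↦ r + p;x. -/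
open CategoryTheory CategoryTheory.Limits

/-- The order induced by nondeterministic sum: `p ≤ q` iff `p + q = q`. -/
def Gle {C : Type*} [Category C] [Grove C] {X Y : C} (p q : X ⟶ Y) : Prop :=
  Grove.gadd p q = q

section GleHelpers

variable {C : Type*} [Category C] [Grove C]

lemma gle_refl' {X Y : C} (p : X ⟶ Y) : Gle p p := Grove.gadd_idem p

lemma gle_trans' {X Y : C} {p q r : X ⟶ Y} (h1 : Gle p q) (h2 : Gle q r) : Gle p r := by
  show Grove.gadd p r = r
  rw [← h2, ← Grove.gadd_assoc, h1]

lemma gle_antisymm' {X Y : C} {p q : X ⟶ Y} (h1 : Gle p q) (h2 : Gle q p) : p = q := by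
  calc p = Grove.gadd q p := h2.symm
    _ = Grove.gadd p q := Grove.gadd_comm q p
    _ = q := h1

lemma gle_add_left' {X Y : C} (p q : X ⟶ Y) : Gle p (Grove.gadd p q) := by
  show Grove.gadd p (Grove.gadd p q) = Grove.gadd p q
  rw [← Grove.gadd_assoc, Grove.gadd_idem]

lemma gle_add_right' {X Y : C} (p q : X ⟶ Y) : Gle q (Grove.gadd p q) := by
  show Grove.gadd q (Grove.gadd p q) = Grove.gadd p q
  rw [Grove.gadd_comm p q, ← Grove.gadd_assoc, Grove.gadd_idem]

lemma add_gle' {X Y : C} {p q r : X ⟶ Y} (h1 : Gle p r) (h2 : Gle q r) :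
    Gle (Grove.gadd p q) r := by
  show Grove.gadd (Grove.gadd p q) r = r
  rw [Grove.gadd_assoc, h2, h1]

lemma rcomp_mono' {X Y Z : C} {p q : X ⟶ Y} (r : Y ⟶ Z) (h : Gle p q) :
    Gle (p ≫ r) (q ≫ r) := by
  show Grove.gadd (p ≫ r) (q ≫ r) = q ≫ r
  rw [← Grove.gadd_comp, h]

lemma lcomp_mono' {X Y Z : C} (u : X ⟶ Y) {p q : Y ⟶ Z} (hu : Linear u) (h : Gle p q) :
    Gle (u ≫ p) (u ≫ q) := by
  show Grove.gadd (u ≫ p) (u ≫ q) = u ≫ q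
  rw [← hu.2, h]

end GleHelpers

set_option maxHeartbeats 800000

/-- A category `C` (idempotent grove, with coproducts whose injections are
linear, all morphisms linear) is a Kleene-Kozen category — i.e. `q;p⋆` is the
least pre-fixpoint of `q + (−);p` and `p⋆;r` is the least pre-fixpoint of
`r + p;(−)` — if and only if `(C,C)` is a `⋆`-idempotent KiC, i.e. the star
operation satisfies `⋆-Fix`, `⋆-Sum`, `⋆-Uni` (for all morphisms `u`) and
`id⋆ = id`. -/
theorem kleeneKozen_iff_star_idem_KiC {C : Type*} [Category C] [Grove C]
    [HasBinaryCoproducts C]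
    (hlin : ∀ (X Y : C) (p : X ⟶ Y), Linear p)
    (star : ∀ {X : C}, (X ⟶ X) → (X ⟶ X)) :
    ((∀ (X Y : C) (p : X ⟶ X) (q : Y ⟶ X),
        Gle (Grove.gadd q ((q ≫ star p) ≫ p)) (q ≫ star p) ∧
        ∀ w : Y ⟶ X, Gle (Grove.gadd q (w ≫ p)) w → Gle (q ≫ star p) w) ∧
     (∀ (X Z : C) (p : X ⟶ X) (r : X ⟶ Z),
        Gle (Grove.gadd r (p ≫ (star p ≫ r))) (star p ≫ r) ∧
        ∀ w : X ⟶ Z, Gle (Grove.gadd r (p ≫ w)) w → Gle (star p ≫ r) w))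
    ↔
    ((∀ (X : C) (p : X ⟶ X), star p = Grove.gadd (𝟙 X) (p ≫ star p)) ∧
     (∀ (X : C) (p q : X ⟶ X),
        star (Grove.gadd p q) = star p ≫ star (q ≫ star p)) ∧
     (∀ (X Y : C) (u : X ⟶ Y) (p : Y ⟶ Y) (q : X ⟶ X),
        u ≫ p = q ≫ u → u ≫ star p = star q ≫ u) ∧
     (∀ X : C, star (𝟙 X) = 𝟙 X)) := by
  constructor
  · rintro ⟨H1, H2⟩
    have fix_ge : ∀ (X : C) (p : X ⟶ X), Gle (Grove.gadd (𝟙 X) (p ≫ star p)) (star p) := by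
      intro X p
      have h := (H2 X X p (𝟙 X)).1
      simpa using h
    have fix_ge' : ∀ (X : C) (p : X ⟶ X), Gle (Grove.gadd (𝟙 X) (star p ≫ p)) (star p) := by
      intro X p
      have h := (H1 X X p (𝟙 X)).1
      simpa using h
    have id_le : ∀ (X : C) (p : X ⟶ X), Gle (𝟙 X) (star p) :=
      fun X p => gle_trans' (gle_add_left' _ _) (fix_ge X p)
    have pstar_le : ∀ (X : C) (p : X ⟶ X), Gle (p ≫ star p) (star p) :=
      fun X p => gle_trans' (gle_add_right' _ _) (fix_ge X p)
    have starp_le : ∀ (X : C) (p : X ⟶ X), Gle (star p ≫ p) (star p) :=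
      fun X p => gle_trans' (gle_add_right' _ _) (fix_ge' X p)
    have star_trans : ∀ (X : C) (p : X ⟶ X), Gle (star p ≫ star p) (star p) :=
      fun X p => (H1 X X p (star p)).2 (star p) (add_gle' (gle_refl' _) (starp_le X p))
    have star_mono : ∀ (X : C) (p t : X ⟶ X), Gle p t → Gle (star p) (star t) := by
      intro X p t h
      have h2 := (H1 X X p (𝟙 X)).2 (star t)
        (add_gle' (id_le X t)
          (gle_trans' (lcomp_mono' (star t) (hlin _ _ _) h) (starp_le X t)))
      simpa using h2
    refine ⟨?_, ?_, ?_, ?_⟩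
    · -- ⋆-Fix
      intro X p
      refine gle_antisymm' ?_ (fix_ge X p)
      have hp1 : Gle p (p ≫ star p) := by
        simpa using lcomp_mono' p (hlin _ _ p) (id_le X p)
      have ht : Gle (Grove.gadd (𝟙 X) (p ≫ Grove.gadd (𝟙 X) (p ≫ star p)))
          (Grove.gadd (𝟙 X) (p ≫ star p)) := by
        rw [(hlin _ _ p).2]
        refine add_gle' (gle_add_left' _ _) (add_gle' ?_ ?_)
        · rw [Category.comp_id]
          exact gle_trans' hp1 (gle_add_right' _ _)
        · exact gle_trans' (lcomp_mono' p (hlin _ _ p) (pstar_le X p)) (gle_add_right' _ _)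
      have h := (H2 X X p (𝟙 X)).2 _ ht
      simpa using h
    · -- ⋆-Sum
      intro X p q
      have hpt : Gle p (Grove.gadd p q) := gle_add_left' _ _
      have hqt : Gle q (Grove.gadd p q) := gle_add_right' _ _
      set t := Grove.gadd p q with ht
      set s := star p ≫ star (q ≫ star p) with hs
      have hstar_s : Gle (star (q ≫ star p)) s := by
        have := rcomp_mono' (star (q ≫ star p)) (id_le X p)
        simpa [hs] using this
      have hid_s : Gle (𝟙 X) s := by
        refine gle_trans' (id_le X p) ?_
        have := lcomp_mono' (star p) (hlin _ _ _) (id_le X (q ≫ star p))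
        simpa [hs] using this
      have hqs : Gle (q ≫ s) s := by
        have h1 : q ≫ s = (q ≫ star p) ≫ star (q ≫ star p) := by
          rw [hs, Category.assoc]
        rw [h1]
        exact gle_trans' (pstar_le X (q ≫ star p)) hstar_s
      have hps : Gle (p ≫ s) s := by
        have h1 : p ≫ s = (p ≫ star p) ≫ star (q ≫ star p) := by
          rw [hs, Category.assoc]
        rw [h1, hs]
        exact rcomp_mono' _ (pstar_le X p)
      have hle1 : Gle (star t) s := by
        have hcond : Gle (Grove.gadd (𝟙 X) (t ≫ s)) s := by
          refine add_gle' hid_s ?_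
          rw [ht, Grove.gadd_comp]
          exact add_gle' hps hqs
        have := (H2 X X t (𝟙 X)).2 s hcond
        simpa using this
      have hp_le : Gle (star p) (star t) := star_mono X p t hpt
      have hqp_le : Gle (star (q ≫ star p)) (star t) := by
        have hcond : Gle (Grove.gadd (𝟙 X) (star t ≫ (q ≫ star p))) (star t) := by
          refine add_gle' (id_le X t) ?_
          have h1 : star t ≫ (q ≫ star p) = (star t ≫ q) ≫ star p := by
            rw [Category.assoc]
          rw [h1]
          have h2 : Gle (star t ≫ q) (star t) :=
            gle_trans' (lcomp_mono' (star t) (hlin _ _ _) hqt) (starp_le X t)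
          refine gle_trans' (rcomp_mono' (star p) h2) ?_
          exact gle_trans' (lcomp_mono' (star t) (hlin _ _ _) hp_le) (star_trans X t)
        have := (H1 X X (q ≫ star p) (𝟙 X)).2 (star t) hcond
        simpa using this
      have hle2 : Gle s (star t) := by
        rw [hs]
        refine gle_trans' (rcomp_mono' _ hp_le) ?_
        exact gle_trans' (lcomp_mono' (star t) (hlin _ _ _) hqp_le) (star_trans X t)
      exact gle_antisymm' hle1 hle2
    · -- ⋆-Uni
      intro X Y u p q huv
      refine gle_antisymm' ?_ ?_
      · refine (H1 Y X p u).2 (star q ≫ u) ?_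
        have h1 : (star q ≫ u) ≫ p = (star q ≫ q) ≫ u := by
          rw [Category.assoc, huv, Category.assoc]
        rw [h1]
        have h2 : Grove.gadd u ((star q ≫ q) ≫ u)
            = Grove.gadd (𝟙 X) (star q ≫ q) ≫ u := by
          rw [Grove.gadd_comp, Category.id_comp]
        rw [h2]
        exact rcomp_mono' u (fix_ge' X q)
      · refine (H2 X Y q u).2 (u ≫ star p) ?_
        refine add_gle' ?_ ?_
        · simpa using lcomp_mono' u (hlin _ _ u) (id_le Y p)
        · have h1 : q ≫ (u ≫ star p) = u ≫ (p ≫ star p) := by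
            rw [← Category.assoc, ← huv, Category.assoc]
          rw [h1]
          exact lcomp_mono' u (hlin _ _ u) (pstar_le Y p)
    · -- ⋆-idempotence
      intro X
      refine gle_antisymm' ?_ (id_le X (𝟙 X))
      have hcond : Gle (Grove.gadd (𝟙 X) ((𝟙 X) ≫ (𝟙 X))) (𝟙 X) := by
        show Grove.gadd (Grove.gadd (𝟙 X) ((𝟙 X) ≫ (𝟙 X))) (𝟙 X) = 𝟙 X
        simp [Grove.gadd_idem]
      have := (H1 X X (𝟙 X) (𝟙 X)).2 (𝟙 X) hcond
      simpa using this
  · rintro ⟨hFix, hSum, hUni, hId⟩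
    have id_le : ∀ (X : C) (p : X ⟶ X), Gle (𝟙 X) (star p) := by
      intro X p
      rw [hFix X p]
      exact gle_add_left' _ _
    have star_mono : ∀ (X : C) (p q : X ⟶ X), Gle p q → Gle (star p) (star q) := by
      intro X p q h
      have h1 : star q = star p ≫ star (q ≫ star p) := by
        conv_lhs => rw [← h]
        exact hSum X p q
      rw [h1]
      have := lcomp_mono' (star p) (hlin _ _ _) (id_le X (q ≫ star p))
      simpa using this
    constructor
    · intro X Y p q
      constructor
      · -- prefixpoint
        have comm : p ≫ star p = star p ≫ p := hUni X X p p p rfl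
        have hsp : star p = Grove.gadd (𝟙 X) (star p ≫ p) := by
          conv_lhs => rw [hFix X p]
          rw [comm]
        have heq : q ≫ star p = Grove.gadd q ((q ≫ star p) ≫ p) := by
          conv_lhs => rw [hsp]
          rw [(hlin _ _ q).2, Category.comp_id, ← Category.assoc]
        rw [heq.symm]
        exact gle_refl' _
      · intro w hw
        have hq : Gle q w := gle_trans' (gle_add_left' _ _) hw
        have hwp : Gle (w ≫ p) w := gle_trans' (gle_add_right' _ _) hw
        have hkey : w ≫ Grove.gadd p (𝟙 X) = 𝟙 Y ≫ w := by
          rw [(hlin _ _ w).2, Category.comp_id, Category.id_comp]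
          exact hwp
        have huni := hUni Y X w (Grove.gadd p (𝟙 X)) (𝟙 Y) hkey
        rw [hId Y, Category.id_comp] at huni
        have h1 : Gle (q ≫ star p) (w ≫ star p) := rcomp_mono' (star p) hq
        have h2 : Gle (w ≫ star p) (w ≫ star (Grove.gadd p (𝟙 X))) :=
          lcomp_mono' w (hlin _ _ w) (star_mono X p _ (gle_add_left' _ _))
        rw [huni] at h2
        exact gle_trans' h1 h2
    · intro X Z p r
      constructor
      · have heq : Grove.gadd r (p ≫ (star p ≫ r)) = star p ≫ r := by
          conv_rhs => rw [hFix X p]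
          rw [Grove.gadd_comp, Category.id_comp, Category.assoc]
        rw [heq]
        exact gle_refl' _
      · intro w hw
        have hr : Gle r w := gle_trans' (gle_add_left' _ _) hw
        have hpw : Gle (p ≫ w) w := gle_trans' (gle_add_right' _ _) hw
        have hkey : w ≫ 𝟙 Z = Grove.gadd p (𝟙 X) ≫ w := by
          rw [Grove.gadd_comp, Category.id_comp, Category.comp_id]
          exact hpw.symm
        have huni := hUni X Z w (𝟙 Z) (Grove.gadd p (𝟙 X)) hkey
        rw [hId Z, Category.comp_id] at huni
        have h1 : Gle (star p ≫ r) (star p ≫ w) := lcomp_mono' (star p) (hlin _ _ _) hr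
        have h2' : Gle (star p ≫ w) (star (Grove.gadd p (𝟙 X)) ≫ w) :=
          rcomp_mono' w (star_mono X p _ (gle_add_left' _ _))
        rw [← huni] at h2'
        exact gle_trans' h1 h2'
end

section
/- In any KiC with coproducts, the identity p⋆ = (p;(id + p))⋆ holds for every endomorphism p : X → X. (In Kleene-algebra notation: p⋆ = (p·(1 + p))⋆.) -/
open CategoryTheory CategoryTheory.Limits

/-- A Kleene-iteration category (KiC): an idempotent grove category with
binary coproducts, a wide subcategory `Tame` of linear morphisms closed under
the coproduct structure (so that the inclusion preserves coproducts), and a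
Kleene iteration satisfying `⋆-Fix`, `⋆-Sum` and `⋆-Uni` for tame `u`. -/
class KiC (C : Type*) [Category C] [Grove C] [HasBinaryCoproducts C] where
  Tame : ∀ X Y : C, Set (X ⟶ Y)
  tame_id : ∀ X : C, 𝟙 X ∈ Tame X X
  tame_comp : ∀ {X Y Z : C} {f : X ⟶ Y} {g : Y ⟶ Z},
    f ∈ Tame X Y → g ∈ Tame Y Z → f ≫ g ∈ Tame X Z
  tame_inl : ∀ X Y : C, (coprod.inl : X ⟶ X ⨿ Y) ∈ Tame X (X ⨿ Y)
  tame_inr : ∀ X Y : C, (coprod.inr : Y ⟶ X ⨿ Y) ∈ Tame Y (X ⨿ Y)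
  tame_desc : ∀ {X Y Z : C} {f : X ⟶ Z} {g : Y ⟶ Z},
    f ∈ Tame X Z → g ∈ Tame Y Z → coprod.desc f g ∈ Tame (X ⨿ Y) Z
  tame_linear : ∀ {X Y : C} {f : X ⟶ Y}, f ∈ Tame X Y → Linear f
  star : ∀ {X : C}, (X ⟶ X) → (X ⟶ X)
  star_fix : ∀ {X : C} (p : X ⟶ X), star p = Grove.gadd (𝟙 X) (p ≫ star p)
  star_sum : ∀ {X : C} (p q : X ⟶ X),
    star (Grove.gadd p q) = star p ≫ star (q ≫ star p)
  star_uni : ∀ {X Y : C} (u : X ⟶ Y) (p : Y ⟶ Y) (q : X ⟶ X),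
    u ∈ Tame X Y → u ≫ p = q ≫ u → u ≫ star p = star q ≫ u

section StarSqrAux

variable {C : Type*} [Category C] [Grove C] [HasBinaryCoproducts C] [KiC C]

lemma linear_inl' (X Y : C) : Linear (coprod.inl : X ⟶ X ⨿ Y) :=
  KiC.tame_linear (KiC.tame_inl X Y)

lemma linear_inr' (X Y : C) : Linear (coprod.inr : Y ⟶ X ⨿ Y) :=
  KiC.tame_linear (KiC.tame_inr X Y)

lemma gadd_desc' {X Y Z : C} (f f' : X ⟶ Z) (g g' : Y ⟶ Z) :
    Grove.gadd (coprod.desc f g) (coprod.desc f' g')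
      = coprod.desc (Grove.gadd f f') (Grove.gadd g g') := by
  apply coprod.hom_ext
  · rw [(linear_inl' X Y).2, coprod.inl_desc, coprod.inl_desc, coprod.inl_desc]
  · rw [(linear_inr' X Y).2, coprod.inr_desc, coprod.inr_desc, coprod.inr_desc]

lemma zero_star' (X : C) : KiC.star (Grove.gzero X X) = 𝟙 X := by
  rw [KiC.star_fix, Grove.gzero_comp, Grove.gadd_comm, Grove.gzero_add]

end StarSqrAux

/-- In any KiC, `p⋆ = (p;(id + p))⋆`. -/
theorem star_sqr {C : Type*} [Category C] [Grove C] [HasBinaryCoproducts C]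
    [KiC C] {X : C} (p : X ⟶ X) :
    KiC.star p = KiC.star (p ≫ Grove.gadd (𝟙 X) p) := by
  classical
  -- notation
  let N : X ⨿ X ⟶ X := coprod.desc (𝟙 X) (𝟙 X)
  let b : X ⨿ X ⟶ X ⨿ X := coprod.desc (Grove.gzero X (X ⨿ X)) (p ≫ coprod.inl)
  let a : X ⨿ X ⟶ X ⨿ X := coprod.desc (p ≫ coprod.inr) (p ≫ coprod.inr)
  let w : X ⨿ X ⟶ X ⨿ X := Grove.gadd (𝟙 (X ⨿ X)) b
  let q : X ⨿ X ⟶ X ⨿ X :=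
    coprod.desc (p ≫ coprod.inr) (Grove.gadd (p ≫ coprod.inl) (p ≫ coprod.inr))
  let s : X ⟶ X := p ≫ Grove.gadd (𝟙 X) p
  have tameN : N ∈ KiC.Tame (X ⨿ X) X := KiC.tame_desc (KiC.tame_id X) (KiC.tame_id X)
  have linl := linear_inl' X X
  have linr := linear_inr' X X
  -- inl ≫ star b = inl
  have h1 : (coprod.inl : X ⟶ X ⨿ X) ≫ KiC.star b = coprod.inl := by
    have hcomm : (coprod.inl : X ⟶ X ⨿ X) ≫ b = Grove.gzero X X ≫ coprod.inl := by
      show coprod.inl ≫ coprod.desc (Grove.gzero X (X ⨿ X)) (p ≫ coprod.inl) = _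
      rw [coprod.inl_desc, Grove.gzero_comp]
    rw [KiC.star_uni _ _ _ (KiC.tame_inl X X) hcomm, zero_star', Category.id_comp]
  -- star b = w
  have hbstar : KiC.star b = w := by
    apply coprod.hom_ext
    · rw [h1, linl.2, Category.comp_id]
      show coprod.inl = Grove.gadd coprod.inl (coprod.inl ≫ coprod.desc (Grove.gzero X (X ⨿ X)) (p ≫ coprod.inl))
      rw [coprod.inl_desc, Grove.gadd_comm, Grove.gzero_add]
    · rw [KiC.star_fix b, linr.2, Category.comp_id, linr.2, Category.comp_id]
      congr 1
      show coprod.inr ≫ (b ≫ KiC.star b) = coprod.inr ≫ b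
      rw [← Category.assoc]
      show (coprod.inr ≫ coprod.desc (Grove.gzero X (X ⨿ X)) (p ≫ coprod.inl)) ≫ KiC.star b
        = coprod.inr ≫ coprod.desc (Grove.gzero X (X ⨿ X)) (p ≫ coprod.inl)
      rw [coprod.inr_desc, Category.assoc, h1]
  -- q = b + a
  have hq : q = Grove.gadd b a := by
    show _ = Grove.gadd (coprod.desc (Grove.gzero X (X ⨿ X)) (p ≫ coprod.inl))
      (coprod.desc (p ≫ coprod.inr) (p ≫ coprod.inr))
    rw [gadd_desc', Grove.gzero_add]
  -- star q = w ≫ star (a ≫ w)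
  have hqstar : KiC.star q = w ≫ KiC.star (a ≫ w) := by
    rw [hq, KiC.star_sum, hbstar]
  -- ∇ ≫ star p = star q ≫ ∇
  have huni1 : N ≫ KiC.star p = KiC.star q ≫ N := by
    apply KiC.star_uni _ _ _ tameN
    show coprod.desc (𝟙 X) (𝟙 X) ≫ p
      = coprod.desc (p ≫ coprod.inr) (Grove.gadd (p ≫ coprod.inl) (p ≫ coprod.inr)) ≫ coprod.desc (𝟙 X) (𝟙 X)
    simp only [coprod.desc_comp, Category.id_comp, Category.assoc, coprod.inl_desc,
      coprod.inr_desc, Category.comp_id, Grove.gadd_comp, Grove.gadd_idem]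
  -- ∇ ≫ star s = star (a ≫ w) ≫ ∇
  have huni2 : N ≫ KiC.star s = KiC.star (a ≫ w) ≫ N := by
    apply KiC.star_uni _ _ _ tameN
    have hwN : w ≫ N = coprod.desc (𝟙 X) (Grove.gadd (𝟙 X) p) := by
      show Grove.gadd (𝟙 (X ⨿ X)) (coprod.desc (Grove.gzero X (X ⨿ X)) (p ≫ coprod.inl))
        ≫ coprod.desc (𝟙 X) (𝟙 X) = _
      rw [Grove.gadd_comp, Category.id_comp, coprod.desc_comp, Grove.gzero_comp,
        Category.assoc, coprod.inl_desc, Category.comp_id]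
      rw [gadd_desc']
      rw [Grove.gadd_comm (𝟙 X) (Grove.gzero X X), Grove.gzero_add]
    show coprod.desc (𝟙 X) (𝟙 X) ≫ s = (a ≫ w) ≫ coprod.desc (𝟙 X) (𝟙 X)
    rw [Category.assoc, hwN]
    show coprod.desc (𝟙 X) (𝟙 X) ≫ (p ≫ Grove.gadd (𝟙 X) p)
      = coprod.desc (p ≫ coprod.inr) (p ≫ coprod.inr) ≫ coprod.desc (𝟙 X) (Grove.gadd (𝟙 X) p)
    simp only [coprod.desc_comp, Category.id_comp, Category.assoc, coprod.inr_desc]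
  -- assemble
  have hinlN : (coprod.inl : X ⟶ X ⨿ X) ≫ N = 𝟙 X := coprod.inl_desc _ _
  have hinlw : (coprod.inl : X ⟶ X ⨿ X) ≫ w = coprod.inl := by
    show coprod.inl ≫ Grove.gadd (𝟙 (X ⨿ X)) (coprod.desc (Grove.gzero X (X ⨿ X)) (p ≫ coprod.inl)) = _
    rw [linl.2, Category.comp_id, coprod.inl_desc, Grove.gadd_comm, Grove.gzero_add]
  calc KiC.star p = (coprod.inl ≫ N) ≫ KiC.star p := by rw [hinlN, Category.id_comp]
    _ = coprod.inl ≫ KiC.star q ≫ N := by rw [Category.assoc, huni1]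
    _ = (coprod.inl ≫ w) ≫ KiC.star (a ≫ w) ≫ N := by rw [hqstar]; simp [Category.assoc]
    _ = coprod.inl ≫ KiC.star (a ≫ w) ≫ N := by rw [hinlw]
    _ = (coprod.inl ≫ N) ≫ KiC.star s := by rw [← huni2]; simp [Category.assoc]
    _ = KiC.star s := by rw [hinlN, Category.id_comp]
end

section
/- Let Q be a unital quantale and define the monad T on Set by TX = Q^X with unit η(x)(y) = 1 if x = y and ⊥ otherwise, and Kleisli extension p*(f)(y) = ⋁_{x} p(x)(y)·f(x). Then the Kleisli category of T is a Kleene-Kozen category: hom-sets X → Q^Y form bounded join-semilattices pointwise, Kleisli composition distributes over joins on both sides and is strict, and defining p⋆ as the least fixpoint of q ↦ id + q;p yields that q;p⋆ is the least pre-fixpoint of q + (−);p and p⋆;r is the least pre-fixpoint of r + p;(−). -/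
open Classical

variable {Q : Type*} [CompleteLattice Q] [Monoid Q]

/-- Kleisli composition for the quantale-valued-function monad `TX = Q^X`
(uncurried form): `(f;g)(x)(z) = ⋁_y g(y)(z)·f(x)(y)`, matching the Kleisli
extension `p*(f)(y) = ⋁_x p(x)(y)·f(x)`. -/
def qcomp {X Y Z : Type*} (f : X → Y → Q) (g : Y → Z → Q) : X → Z → Q :=
  fun x z => ⨆ y, g y z * f x y

/-- The Kleisli identity (unit of the monad). -/
noncomputable def qid {X : Type*} : X → X → Q :=
  fun x y => if x = y then (1 : Q) else ⊥

/-- Kleene star, defined as the least pre-fixpoint of `w ↦ id ⊔ w;p`. -/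
noncomputable def qstar {X : Type*} (p : X → X → Q) : X → X → Q :=
  sInf {w | qid ⊔ qcomp w p ≤ w}

section helpers
variable (hl : ∀ (a : Q) (s : Set Q), a * sSup s = ⨆ b ∈ s, a * b)
variable (hr : ∀ (a : Q) (s : Set Q), sSup s * a = ⨆ b ∈ s, b * a)
include hl hr

lemma qk_mul_iSup {ι : Sort*} (a : Q) (f : ι → Q) : a * (⨆ i, f i) = ⨆ i, a * f i := by
  rw [iSup, hl, iSup_range]

lemma qk_iSup_mul {ι : Sort*} (a : Q) (f : ι → Q) : (⨆ i, f i) * a = ⨆ i, f i * a := by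
  rw [iSup, hr, iSup_range]

lemma qk_mul_bot (a : Q) : a * (⊥ : Q) = ⊥ := by simpa using hl a ∅

lemma qk_bot_mul (a : Q) : (⊥ : Q) * a = ⊥ := by simpa using hr a ∅

lemma qk_mul_sup (a b c : Q) : a * (b ⊔ c) = a * b ⊔ a * c := by
  rw [sup_eq_iSup, qk_mul_iSup hl hr]
  simp [iSup_bool_eq]

lemma qk_sup_mul (a b c : Q) : (b ⊔ c) * a = b * a ⊔ c * a := by
  rw [sup_eq_iSup, qk_iSup_mul hl hr]
  simp [iSup_bool_eq]

lemma qk_mul_le_mul_left {b c : Q} (a : Q) (h : b ≤ c) : a * b ≤ a * c := by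
  have : a * c = a * b ⊔ a * c := by rw [← qk_mul_sup hl hr, sup_eq_right.2 h]
  rw [this]; exact le_sup_left

lemma qk_mul_le_mul_right {b c : Q} (a : Q) (h : b ≤ c) : b * a ≤ c * a := by
  have : c * a = b * a ⊔ c * a := by rw [← qk_sup_mul hl hr, sup_eq_right.2 h]
  rw [this]; exact le_sup_left

variable {X Y Z W : Type*}

lemma qcomp_id_left (p : X → Y → Q) : qcomp qid p = p := by
  funext x z
  unfold qcomp qid
  apply le_antisymm
  · exact iSup_le fun y => by
      by_cases h : x = y
      · subst h; simp
      · simp [h, qk_mul_bot hl hr]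
  · calc p x z = p x z * 1 := by rw [mul_one]
      _ ≤ _ := by
        refine le_trans (le_of_eq ?_) (le_iSup _ x)
        simp

lemma qcomp_id_right (p : X → Y → Q) : qcomp p qid = p := by
  funext x z
  unfold qcomp qid
  apply le_antisymm
  · exact iSup_le fun y => by
      by_cases h : y = z
      · subst h; simp
      · simp [h, qk_bot_mul hl hr]
  · calc p x z = 1 * p x z := by rw [one_mul]
      _ ≤ _ := by
        refine le_trans (le_of_eq ?_) (le_iSup _ z)
        simp

lemma qcomp_bot_left (p : Y → Z → Q) : qcomp (⊥ : X → Y → Q) p = ⊥ := by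
  funext x z
  simp [qcomp, qk_mul_bot hl hr]

lemma qcomp_bot_right (p : X → Y → Q) : qcomp p (⊥ : Y → Z → Q) = ⊥ := by
  funext x z
  simp [qcomp, qk_bot_mul hl hr]

lemma qcomp_sup_left (q r : X → Y → Q) (p : Y → Z → Q) :
    qcomp (q ⊔ r) p = qcomp q p ⊔ qcomp r p := by
  funext x z
  simp only [qcomp, Pi.sup_apply, qk_mul_sup hl hr]
  exact iSup_sup_eq

lemma qcomp_sup_right (p : X → Y → Q) (q r : Y → Z → Q) :
    qcomp p (q ⊔ r) = qcomp p q ⊔ qcomp p r := by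
  funext x z
  simp only [qcomp, Pi.sup_apply, qk_sup_mul hl hr]
  exact iSup_sup_eq

lemma qcomp_iSup_left {ι : Sort*} (f : ι → (X → Y → Q)) (g : Y → Z → Q) :
    qcomp (⨆ i, f i) g = ⨆ i, qcomp (f i) g := by
  funext x z
  simp only [qcomp, iSup_apply, qk_mul_iSup hl hr]
  exact iSup_comm

lemma qcomp_iSup_right {ι : Sort*} (f : X → Y → Q) (g : ι → (Y → Z → Q)) :
    qcomp f (⨆ i, g i) = ⨆ i, qcomp f (g i) := by
  funext x z
  simp only [qcomp, iSup_apply, qk_iSup_mul hl hr]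
  exact iSup_comm

lemma qcomp_mono_left {f f' : X → Y → Q} (g : Y → Z → Q) (h : f ≤ f') :
    qcomp f g ≤ qcomp f' g := fun x => fun z =>
  iSup_mono fun y => qk_mul_le_mul_left hl hr _ (h x y)

lemma qcomp_mono_right (f : X → Y → Q) {g g' : Y → Z → Q} (h : g ≤ g') :
    qcomp f g ≤ qcomp f g' := fun x => fun z =>
  iSup_mono fun y => qk_mul_le_mul_right hl hr _ (h y z)

lemma qcomp_assoc (f : X → Y → Q) (g : Y → Z → Q) (h : Z → W → Q) :
    qcomp (qcomp f g) h = qcomp f (qcomp g h) := by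
  funext x w
  show (⨆ z, h z w * ⨆ y, g y z * f x y) = ⨆ y, (⨆ z, h z w * g y z) * f x y
  calc (⨆ z, h z w * ⨆ y, g y z * f x y)
      = ⨆ z, ⨆ y, h z w * (g y z * f x y) := by simp_rw [qk_mul_iSup hl hr]
    _ = ⨆ y, ⨆ z, (h z w * g y z) * f x y := by rw [iSup_comm]; simp_rw [mul_assoc]
    _ = ⨆ y, (⨆ z, h z w * g y z) * f x y := by simp_rw [qk_iSup_mul hl hr]

end helpers

noncomputable def qpow {X : Type*} (p : X → X → Q) : ℕ → (X → X → Q)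
  | 0 => qid
  | n + 1 => qcomp (qpow p n) p

section star
variable (hl : ∀ (a : Q) (s : Set Q), a * sSup s = ⨆ b ∈ s, a * b)
variable (hr : ∀ (a : Q) (s : Set Q), sSup s * a = ⨆ b ∈ s, b * a)
include hl hr
variable {X : Type*}

lemma qpow_succ' (p : X → X → Q) (n : ℕ) : qpow p (n + 1) = qcomp p (qpow p n) := by
  induction n with
  | zero => show qcomp qid p = qcomp p qid; rw [qcomp_id_left hl hr, qcomp_id_right hl hr]
  | succ n ih =>
      show qcomp (qpow p (n + 1)) p = qcomp p (qcomp (qpow p n) p)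
      rw [← qcomp_assoc hl hr, ← ih]

lemma qpow_le_of_prefix {p w : X → X → Q} (hw : qid ⊔ qcomp w p ≤ w) (n : ℕ) :
    qpow p n ≤ w := by
  induction n with
  | zero => exact le_trans le_sup_left hw
  | succ n ih =>
      exact le_trans (le_trans (qcomp_mono_left hl hr p ih) le_sup_right) hw

lemma qstar_eq (p : X → X → Q) : qstar p = ⨆ n, qpow p n := by
  apply le_antisymm
  · apply sInf_le
    show qid ⊔ qcomp (⨆ n, qpow p n) p ≤ ⨆ n, qpow p n
    apply sup_le
    · exact le_iSup (qpow p) 0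
    · rw [qcomp_iSup_left hl hr]
      exact iSup_le fun n => le_iSup (qpow p) (n + 1)
  · exact iSup_le fun n => le_sInf fun w hw => qpow_le_of_prefix hl hr hw n

end star

/-- For a unital quantale `Q` (multiplication preserves arbitrary joins on
both sides), the Kleisli category of `TX = Q^X` is a Kleene-Kozen category:
hom-sets are (complete, in particular bounded) join-semilattices pointwise,
`qid` is a two-sided identity, composition is strict and distributes over
joins on both sides, and `q;p⋆` (resp. `p⋆;r`) is the least pre-fixpoint of
`q ⊔ (−);p` (resp. `r ⊔ p;(−)`). -/
theorem quantale_kleisli_kleeneKozen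
    (hl : ∀ (a : Q) (s : Set Q), a * sSup s = ⨆ b ∈ s, a * b)
    (hr : ∀ (a : Q) (s : Set Q), sSup s * a = ⨆ b ∈ s, b * a) :
    (∀ (X Y : Type) (p : X → Y → Q), qcomp qid p = p) ∧
    (∀ (X Y : Type) (p : X → Y → Q), qcomp p qid = p) ∧
    (∀ (X Y Z : Type) (p : Y → Z → Q), qcomp (⊥ : X → Y → Q) p = ⊥) ∧
    (∀ (X Y Z : Type) (p : X → Y → Q), qcomp p (⊥ : Y → Z → Q) = ⊥) ∧
    (∀ (X Y Z : Type) (q r : X → Y → Q) (p : Y → Z → Q),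
      qcomp (q ⊔ r) p = qcomp q p ⊔ qcomp r p) ∧
    (∀ (X Y Z : Type) (p : X → Y → Q) (q r : Y → Z → Q),
      qcomp p (q ⊔ r) = qcomp p q ⊔ qcomp p r) ∧
    (∀ (X Y : Type) (p : X → X → Q) (q : Y → X → Q),
      (q ⊔ qcomp (qcomp q (qstar p)) p ≤ qcomp q (qstar p)) ∧
      ∀ w : Y → X → Q, q ⊔ qcomp w p ≤ w → qcomp q (qstar p) ≤ w) ∧
    (∀ (X Z : Type) (p : X → X → Q) (r : X → Z → Q),
      (r ⊔ qcomp p (qcomp (qstar p) r) ≤ qcomp (qstar p) r) ∧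
      ∀ w : X → Z → Q, r ⊔ qcomp p w ≤ w → qcomp (qstar p) r ≤ w) := by
  refine ⟨fun X Y p => qcomp_id_left hl hr p, fun X Y p => qcomp_id_right hl hr p,
    fun X Y Z p => qcomp_bot_left hl hr p, fun X Y Z p => qcomp_bot_right hl hr p,
    fun X Y Z q r p => qcomp_sup_left hl hr q r p, fun X Y Z p q r => qcomp_sup_right hl hr p q r,
    ?_, ?_⟩
  · intro X Y p q
    have hstar : qstar p = ⨆ n, qpow p n := qstar_eq hl hr p
    have hdist : qcomp q (qstar p) = ⨆ n, qcomp q (qpow p n) := by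
      rw [hstar, qcomp_iSup_right hl hr]
    constructor
    · apply sup_le
      · rw [hdist]
        exact le_trans (le_of_eq (qcomp_id_right hl hr q).symm)
          (le_iSup (fun n => qcomp q (qpow p n)) 0)
      · rw [hdist, qcomp_iSup_left hl hr]
        refine iSup_le fun n => ?_
        rw [qcomp_assoc hl hr]
        exact le_iSup (fun n => qcomp q (qpow p n)) (n + 1)
    · intro w hw
      rw [hdist]
      refine iSup_le fun n => ?_
      induction n with
      | zero => exact le_trans (le_of_eq (qcomp_id_right hl hr q)) (le_trans le_sup_left hw)
      | succ n ih =>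
          show qcomp q (qcomp (qpow p n) p) ≤ w
          rw [← qcomp_assoc hl hr]
          exact le_trans (le_trans (qcomp_mono_left hl hr p ih) le_sup_right) hw
  · intro X Z p r
    have hstar : qstar p = ⨆ n, qpow p n := qstar_eq hl hr p
    have hdist : qcomp (qstar p) r = ⨆ n, qcomp (qpow p n) r := by
      rw [hstar, qcomp_iSup_left hl hr]
    constructor
    · apply sup_le
      · rw [hdist]
        exact le_trans (le_of_eq (qcomp_id_left hl hr r).symm)
          (le_iSup (fun n => qcomp (qpow p n) r) 0)
      · rw [hdist, qcomp_iSup_right hl hr]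
        refine iSup_le fun n => ?_
        rw [← qcomp_assoc hl hr, ← qpow_succ' hl hr]
        exact le_iSup (fun n => qcomp (qpow p n) r) (n + 1)
    · intro w hw
      rw [hdist]
      refine iSup_le fun n => ?_
      induction n with
      | zero => exact le_trans (le_of_eq (qcomp_id_left hl hr r)) (le_trans le_sup_left hw)
      | succ n ih =>
          rw [qpow_succ' hl hr, qcomp_assoc hl hr]
          exact le_trans (le_trans (qcomp_mono_right hl hr p ih) le_sup_right) hw
end

section
/- In the Kleisli category of a monad T on a category C with binary coproducts, the Kleisli coproduct injections inl;η : X → T(X⊕Y) and inr;η : Y → T(X⊕Y) are linear, provided C is an idempotent grove category with linear coproduct injections and Kleisli extension satisfies the additivity conditions T0 = 0 and T(p+q) = Tp + Tq (equivalently, Kleisli extension (−)* preserves 0 and +). -/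
open CategoryTheory CategoryTheory.Limits

lemma kleisli_comp_simplify {C : Type*} [Category C] (T : Monad C)
    {W A Z : C} (j : W ⟶ A) (g : A ⟶ T.obj Z) :
    (j ≫ T.η.app A) ≫ (T.map g ≫ T.μ.app Z) = j ≫ g := by
  have h := T.η.naturality g
  calc (j ≫ T.η.app A) ≫ (T.map g ≫ T.μ.app Z)
      = j ≫ (T.η.app A ≫ T.map g) ≫ T.μ.app Z := by simp
    _ = j ≫ (g ≫ T.η.app (T.obj Z)) ≫ T.μ.app Z := by
        simp only [Functor.id_map] at h; rw [h]
    _ = j ≫ g := by simp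

/-- If `C` is an idempotent grove category with linear coproduct injections
and `T` is a monad whose functor preserves the grove structure
(`T0 = 0`, `T(p+q) = Tp + Tq`), then the Kleisli coproduct injections
`inl;η` and `inr;η` are linear in the Kleisli category, i.e. they are
strict and distribute over sums w.r.t. Kleisli composition
`f ; g* = f ≫ T(g) ≫ μ`. -/
theorem kleisli_injections_linear {C : Type*} [Category C] [Grove C]
    [HasBinaryCoproducts C]
    (hinl : ∀ X Y : C, Linear (coprod.inl : X ⟶ X ⨿ Y))
    (hinr : ∀ X Y : C, Linear (coprod.inr : Y ⟶ X ⨿ Y))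
    (T : Monad C)
    (hT0 : ∀ X Y : C, T.map (Grove.gzero X Y) = Grove.gzero (T.obj X) (T.obj Y))
    (hTadd : ∀ {X Y : C} (p q : X ⟶ Y),
      T.map (Grove.gadd p q) = Grove.gadd (T.map p) (T.map q))
    (X Y : C) :
    (∀ Z : C,
      (coprod.inl ≫ T.η.app (X ⨿ Y)) ≫
          (T.map (Grove.gzero (X ⨿ Y) (T.obj Z)) ≫ T.μ.app Z) =
        Grove.gzero X (T.obj Z)) ∧
    (∀ (Z : C) (q r : (X ⨿ Y : C) ⟶ T.obj Z),
      (coprod.inl ≫ T.η.app (X ⨿ Y)) ≫ (T.map (Grove.gadd q r) ≫ T.μ.app Z) =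
        Grove.gadd ((coprod.inl ≫ T.η.app (X ⨿ Y)) ≫ (T.map q ≫ T.μ.app Z))
          ((coprod.inl ≫ T.η.app (X ⨿ Y)) ≫ (T.map r ≫ T.μ.app Z))) ∧
    (∀ Z : C,
      (coprod.inr ≫ T.η.app (X ⨿ Y)) ≫
          (T.map (Grove.gzero (X ⨿ Y) (T.obj Z)) ≫ T.μ.app Z) =
        Grove.gzero Y (T.obj Z)) ∧
    (∀ (Z : C) (q r : (X ⨿ Y : C) ⟶ T.obj Z),
      (coprod.inr ≫ T.η.app (X ⨿ Y)) ≫ (T.map (Grove.gadd q r) ≫ T.μ.app Z) =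
        Grove.gadd ((coprod.inr ≫ T.η.app (X ⨿ Y)) ≫ (T.map q ≫ T.μ.app Z))
          ((coprod.inr ≫ T.η.app (X ⨿ Y)) ≫ (T.map r ≫ T.μ.app Z))) := by
  refine ⟨?_, ?_, ?_, ?_⟩
  · intro Z
    rw [kleisli_comp_simplify]
    exact (hinl X Y).1 (T.obj Z)
  · intro Z q r
    rw [kleisli_comp_simplify, kleisli_comp_simplify, kleisli_comp_simplify]
    exact (hinl X Y).2 (T.obj Z) q r
  · intro Z
    rw [kleisli_comp_simplify]
    exact (hinr X Y).1 (T.obj Z)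
  · intro Z q r
    rw [kleisli_comp_simplify, kleisli_comp_simplify, kleisli_comp_simplify]
    exact (hinr X Y).2 (T.obj Z) q r
end

section
/- Let (C,Tame) be a KiC and T a monad on C such that T preserves Kleene iteration (T(r⋆) = (Tr)⋆) and T restricts to a monad on Tame. Then for every Kleisli morphism p : X → TX, the element η;(p*)⋆ (where p* : TX → TX is Kleisli extension and ⋆ is iteration in C) satisfies the Kleisli-level fixpoint law: η;(p*)⋆ = η + p;(η;(p*)⋆)*, i.e., it is a Kleene iteration for the Kleisli category satisfying ⋆-Fix. -/
open CategoryTheory CategoryTheory.Limits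

/-- Let `(C,Tame)` be a KiC and `T` a monad on `C` preserving Kleene
iteration (`T(r⋆) = (Tr)⋆`) and restricting to a monad on `Tame`
(its functor maps tame morphisms to tame ones, and the components of its
unit and multiplication are tame). Then for every Kleisli morphism
`p : X ⟶ TX`, the morphism `η;(p*)⋆` satisfies the Kleisli-level fixpoint
law `⋆-Fix`: `η;(p*)⋆ = η + p;(η;(p*)⋆)*`, where `f* = T(f);μ` is Kleisli
extension and `;` on the right of `p` is Kleisli composition. -/
theorem kleisli_star_fix {C : Type*} [Category C] [Grove C]
    [HasBinaryCoproducts C] [KiC C] (T : Monad C)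
    (hstar : ∀ (X : C) (r : X ⟶ X), T.map (KiC.star r) = KiC.star (T.map r))
    (hmap_tame : ∀ {X Y : C} (f : X ⟶ Y),
      f ∈ KiC.Tame X Y → T.map f ∈ KiC.Tame (T.obj X) (T.obj Y))
    (hη_tame : ∀ X : C, T.η.app X ∈ KiC.Tame X (T.obj X))
    (hμ_tame : ∀ X : C, T.μ.app X ∈ KiC.Tame (T.obj (T.obj X)) (T.obj X))
    {X : C} (p : X ⟶ T.obj X) :
    T.η.app X ≫ KiC.star (T.map p ≫ T.μ.app X) =
      Grove.gadd (T.η.app X)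
        (p ≫ (T.map (T.η.app X ≫ KiC.star (T.map p ≫ T.μ.app X)) ≫
          T.μ.app X)) := by
  set ps := T.map p ≫ T.μ.app X with hps
  have hnat : T.map (T.map p) ≫ T.μ.app (T.obj X) = T.μ.app X ≫ T.map p := by
    simpa using T.μ.naturality p
  have hηnat : p ≫ T.η.app (T.obj X) = T.η.app X ≫ T.map p := by
    simpa using T.η.naturality p
  have hcomm : T.map ps ≫ T.μ.app X = T.μ.app X ≫ ps := by
    rw [hps, T.map_comp, Category.assoc, T.assoc, ← Category.assoc, hnat,
      Category.assoc]
  have huni : T.μ.app X ≫ KiC.star ps = KiC.star (T.map ps) ≫ T.μ.app X :=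
    KiC.star_uni _ _ _ (hμ_tame X) hcomm.symm
  have hext : T.map (T.η.app X ≫ KiC.star ps) ≫ T.μ.app X = KiC.star ps := by
    rw [T.map_comp, hstar, Category.assoc, ← huni, ← Category.assoc,
      T.right_unit, Category.id_comp]
  rw [hext]
  have hηp : T.η.app X ≫ ps = p := by
    rw [hps, ← Category.assoc, ← hηnat, Category.assoc, T.left_unit]
    simp
  have hlin := (KiC.tame_linear (hη_tame X)).2
  conv_lhs => rw [KiC.star_fix ps]
  rw [hlin, Category.comp_id, ← Category.assoc, hηp]
end

section
/- Dinaturality is derivable: in a category with binary coproducts equipped with an Elgot iteration operator (−)† : C(X, Y⊕X) → C(X,Y) satisfying Fixpoint (p;[id,p†] = p†), Codiagonal ((p;[id,inr])† = p††), Naturality restricted to q = id⊕inl, and Uniformity for the coproduct injections u = inl and u = inr, the law (p;[inl,q])† = p;[id,(q;[inl,p])†] holds for all p : X → Y⊕Z and q : Z → Y⊕X. -/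
open CategoryTheory CategoryTheory.Limits


private lemma desc_inl_comp_inr {C : Type*} [CategoryTheory.Category C]
    [HasBinaryCoproducts C] {A B D : C} (f : B ⟶ D) :
    coprod.desc (coprod.inl : A ⟶ A ⨿ D) (f ≫ coprod.inr) =
      coprod.map (𝟙 A) f := by
  apply coprod.hom_ext <;> simp [coprod.inl_desc, coprod.inr_desc]

set_option maxHeartbeats 1000000 in
/-- Dinaturality is derivable: given an Elgot iteration operator
`(−)† : C(X, Y⊕X) → C(X,Y)` satisfying Fixpoint, Codiagonal, Naturality
restricted to `q = id ⊕ inl`, and Uniformity for the coproduct injections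
`u = inl` and `u = inr`, the law
`(p;[inl,q])† = p;[id,(q;[inl,p])†]` holds for `p : X ⟶ Y⊕Z`,
`q : Z ⟶ Y⊕X`. -/
theorem dinaturality_derivable {C : Type*} [Category C] [HasBinaryCoproducts C]
    (elg : ∀ {X Y : C}, (X ⟶ Y ⨿ X) → (X ⟶ Y))
    -- Fixpoint
    (hfix : ∀ {X Y : C} (p : X ⟶ Y ⨿ X),
      p ≫ coprod.desc (𝟙 Y) (elg p) = elg p)
    -- Codiagonal
    (hcodiag : ∀ {X Y : C} (p : X ⟶ (Y ⨿ X) ⨿ X),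
      elg (p ≫ coprod.desc (𝟙 (Y ⨿ X)) coprod.inr) = elg (elg p))
    -- Naturality, restricted to q = id ⊕ inl
    (hnat : ∀ {X A B D : C} (p : X ⟶ (A ⨿ B) ⨿ X),
      elg p ≫ coprod.map (𝟙 A) (coprod.inl : B ⟶ B ⨿ D) =
        elg (p ≫ coprod.map (coprod.map (𝟙 A) (coprod.inl : B ⟶ B ⨿ D)) (𝟙 X)))
    -- Uniformity for u = inl
    (hunil : ∀ {A B Y : C} (g : (A ⨿ B : C) ⟶ Y ⨿ (A ⨿ B)) (f : A ⟶ Y ⨿ A),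
      (coprod.inl : A ⟶ A ⨿ B) ≫ g =
          f ≫ coprod.map (𝟙 Y) (coprod.inl : A ⟶ A ⨿ B) →
        (coprod.inl : A ⟶ A ⨿ B) ≫ elg g = elg f)
    -- Uniformity for u = inr
    (hunir : ∀ {A B Y : C} (g : (A ⨿ B : C) ⟶ Y ⨿ (A ⨿ B)) (f : B ⟶ Y ⨿ B),
      (coprod.inr : B ⟶ A ⨿ B) ≫ g =
          f ≫ coprod.map (𝟙 Y) (coprod.inr : B ⟶ A ⨿ B) →
        (coprod.inr : B ⟶ A ⨿ B) ≫ elg g = elg f)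
    {X Y Z : C} (p : X ⟶ Y ⨿ Z) (q : Z ⟶ Y ⨿ X) :
    elg (p ≫ coprod.desc coprod.inl q) =
      p ≫ coprod.desc (𝟙 Y) (elg (q ≫ coprod.desc coprod.inl p)) := by
  -- Abbreviation: the combined loop on `X ⨿ Z`.
  -- `t := [p ≫ (𝟙 ⊕ inr), q ≫ (𝟙 ⊕ inl)] : X ⨿ Z ⟶ Y ⨿ (X ⨿ Z)`
  -- Step 1: `inl ≫ elg t = elg (p ≫ [inl, q])`.
  have hA : (coprod.inl : X ⟶ X ⨿ Z) ≫
      elg (coprod.desc (p ≫ coprod.map (𝟙 Y) coprod.inr)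
        (q ≫ coprod.map (𝟙 Y) coprod.inl)) =
      elg (p ≫ coprod.desc coprod.inl q) := by
    -- the two-layer morphism: from `X` the `Z`-continuation uses the *outer*
    -- loop, from `Z` the `X`-continuation uses the *inner* loop.
    have hfw := hfix (coprod.desc
        (p ≫ coprod.map (coprod.inl : Y ⟶ Y ⨿ (X ⨿ Z)) (coprod.inr : Z ⟶ X ⨿ Z))
        (q ≫ coprod.desc (coprod.inl ≫ coprod.inl)
          ((coprod.inl : X ⟶ X ⨿ Z) ≫ coprod.inr ≫ coprod.inl)))
    have hinr : (coprod.inr : Z ⟶ X ⨿ Z) ≫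
        elg (coprod.desc
          (p ≫ coprod.map (coprod.inl : Y ⟶ Y ⨿ (X ⨿ Z)) (coprod.inr : Z ⟶ X ⨿ Z))
          (q ≫ coprod.desc (coprod.inl ≫ coprod.inl)
            ((coprod.inl : X ⟶ X ⨿ Z) ≫ coprod.inr ≫ coprod.inl))) =
        q ≫ coprod.map (𝟙 Y) coprod.inl := by
      conv_lhs => rw [← hfw]
      simp [coprod.desc_comp, desc_inl_comp_inr, coprod.inl_desc, coprod.inr_desc, coprod.inl_desc_assoc, coprod.inr_desc_assoc]
    have hinl : (coprod.inl : X ⟶ X ⨿ Z) ≫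
        elg (coprod.desc
          (p ≫ coprod.map (coprod.inl : Y ⟶ Y ⨿ (X ⨿ Z)) (coprod.inr : Z ⟶ X ⨿ Z))
          (q ≫ coprod.desc (coprod.inl ≫ coprod.inl)
            ((coprod.inl : X ⟶ X ⨿ Z) ≫ coprod.inr ≫ coprod.inl))) =
        (p ≫ coprod.desc coprod.inl q) ≫ coprod.map (𝟙 Y) coprod.inl := by
      conv_lhs => rw [← hfw]
      simp [coprod.desc_comp, desc_inl_comp_inr, hinr, coprod.inl_desc, coprod.inr_desc, coprod.inl_desc_assoc, coprod.inr_desc_assoc]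
    have hcd := hcodiag (coprod.desc
        (p ≫ coprod.map (coprod.inl : Y ⟶ Y ⨿ (X ⨿ Z)) (coprod.inr : Z ⟶ X ⨿ Z))
        (q ≫ coprod.desc (coprod.inl ≫ coprod.inl)
          ((coprod.inl : X ⟶ X ⨿ Z) ≫ coprod.inr ≫ coprod.inl)))
    have hwt : (coprod.desc
        (p ≫ coprod.map (coprod.inl : Y ⟶ Y ⨿ (X ⨿ Z)) (coprod.inr : Z ⟶ X ⨿ Z))
        (q ≫ coprod.desc (coprod.inl ≫ coprod.inl)
          ((coprod.inl : X ⟶ X ⨿ Z) ≫ coprod.inr ≫ coprod.inl))) ≫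
        coprod.desc (𝟙 (Y ⨿ (X ⨿ Z))) coprod.inr =
        coprod.desc (p ≫ coprod.map (𝟙 Y) coprod.inr)
          (q ≫ coprod.map (𝟙 Y) coprod.inl) := by
      apply coprod.hom_ext <;> simp [coprod.desc_comp, desc_inl_comp_inr, coprod.inl_desc, coprod.inr_desc, coprod.inl_desc_assoc, coprod.inr_desc_assoc]
    rw [hwt] at hcd
    rw [hcd]
    exact hunil _ _ hinl
  -- Step 2: `inr ≫ elg t = elg (q ≫ [inl, p])`, by the mirrored argument.
  have hB : (coprod.inr : Z ⟶ X ⨿ Z) ≫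
      elg (coprod.desc (p ≫ coprod.map (𝟙 Y) coprod.inr)
        (q ≫ coprod.map (𝟙 Y) coprod.inl)) =
      elg (q ≫ coprod.desc coprod.inl p) := by
    have hfw := hfix (coprod.desc
        (p ≫ coprod.desc (coprod.inl ≫ coprod.inl)
          ((coprod.inr : Z ⟶ X ⨿ Z) ≫ coprod.inr ≫ coprod.inl))
        (q ≫ coprod.map (coprod.inl : Y ⟶ Y ⨿ (X ⨿ Z)) (coprod.inl : X ⟶ X ⨿ Z)))
    have hinl : (coprod.inl : X ⟶ X ⨿ Z) ≫
        elg (coprod.desc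
          (p ≫ coprod.desc (coprod.inl ≫ coprod.inl)
            ((coprod.inr : Z ⟶ X ⨿ Z) ≫ coprod.inr ≫ coprod.inl))
          (q ≫ coprod.map (coprod.inl : Y ⟶ Y ⨿ (X ⨿ Z)) (coprod.inl : X ⟶ X ⨿ Z))) =
        p ≫ coprod.map (𝟙 Y) coprod.inr := by
      conv_lhs => rw [← hfw]
      simp [coprod.desc_comp, desc_inl_comp_inr, coprod.inl_desc, coprod.inr_desc, coprod.inl_desc_assoc, coprod.inr_desc_assoc]
    have hinr : (coprod.inr : Z ⟶ X ⨿ Z) ≫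
        elg (coprod.desc
          (p ≫ coprod.desc (coprod.inl ≫ coprod.inl)
            ((coprod.inr : Z ⟶ X ⨿ Z) ≫ coprod.inr ≫ coprod.inl))
          (q ≫ coprod.map (coprod.inl : Y ⟶ Y ⨿ (X ⨿ Z)) (coprod.inl : X ⟶ X ⨿ Z))) =
        (q ≫ coprod.desc coprod.inl p) ≫ coprod.map (𝟙 Y) coprod.inr := by
      conv_lhs => rw [← hfw]
      simp [coprod.desc_comp, desc_inl_comp_inr, hinl, coprod.inl_desc, coprod.inr_desc, coprod.inl_desc_assoc, coprod.inr_desc_assoc]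
    have hcd := hcodiag (coprod.desc
        (p ≫ coprod.desc (coprod.inl ≫ coprod.inl)
          ((coprod.inr : Z ⟶ X ⨿ Z) ≫ coprod.inr ≫ coprod.inl))
        (q ≫ coprod.map (coprod.inl : Y ⟶ Y ⨿ (X ⨿ Z)) (coprod.inl : X ⟶ X ⨿ Z)))
    have hwt : (coprod.desc
        (p ≫ coprod.desc (coprod.inl ≫ coprod.inl)
          ((coprod.inr : Z ⟶ X ⨿ Z) ≫ coprod.inr ≫ coprod.inl))
        (q ≫ coprod.map (coprod.inl : Y ⟶ Y ⨿ (X ⨿ Z)) (coprod.inl : X ⟶ X ⨿ Z))) ≫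
        coprod.desc (𝟙 (Y ⨿ (X ⨿ Z))) coprod.inr =
        coprod.desc (p ≫ coprod.map (𝟙 Y) coprod.inr)
          (q ≫ coprod.map (𝟙 Y) coprod.inl) := by
      apply coprod.hom_ext <;> simp [coprod.desc_comp, desc_inl_comp_inr, coprod.inl_desc, coprod.inr_desc, coprod.inl_desc_assoc, coprod.inr_desc_assoc]
    rw [hwt] at hcd
    rw [hcd]
    exact hunir _ _ hinr
  -- Step 3: unroll `t` once with Fixpoint and combine.
  have hft := hfix (coprod.desc (p ≫ coprod.map (𝟙 Y) coprod.inr)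
    (q ≫ coprod.map (𝟙 Y) coprod.inl))
  calc elg (p ≫ coprod.desc coprod.inl q)
      = (coprod.inl : X ⟶ X ⨿ Z) ≫
          elg (coprod.desc (p ≫ coprod.map (𝟙 Y) coprod.inr)
            (q ≫ coprod.map (𝟙 Y) coprod.inl)) := hA.symm
    _ = (coprod.inl : X ⟶ X ⨿ Z) ≫
          (coprod.desc (p ≫ coprod.map (𝟙 Y) coprod.inr)
            (q ≫ coprod.map (𝟙 Y) coprod.inl)) ≫
          coprod.desc (𝟙 Y)
            (elg (coprod.desc (p ≫ coprod.map (𝟙 Y) coprod.inr)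
              (q ≫ coprod.map (𝟙 Y) coprod.inl))) := by rw [hft]
    _ = p ≫ coprod.desc (𝟙 Y)
          ((coprod.inr : Z ⟶ X ⨿ Z) ≫
            elg (coprod.desc (p ≫ coprod.map (𝟙 Y) coprod.inr)
              (q ≫ coprod.map (𝟙 Y) coprod.inl))) := by
        simp [coprod.desc_comp, desc_inl_comp_inr, coprod.inl_desc, coprod.inr_desc, coprod.inl_desc_assoc, coprod.inr_desc_assoc]
    _ = p ≫ coprod.desc (𝟙 Y) (elg (q ≫ coprod.desc coprod.inl p)) := by rw [hB]
end

section
/- Given an Elgot iteration (−)† satisfying Naturality, Fixpoint, Dinaturality, Codiagonal and Uniformity (for tame morphisms) on an idempotent grove category with coproducts, the operator p⋆ := (inl + p;inr)† satisfies ⋆-Uni: if u;p = q;u with u tame, then u;p⋆ = q⋆;u. -/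
open CategoryTheory CategoryTheory.Limits

/-- Given an Elgot iteration `(−)†` satisfying Naturality, Fixpoint,
Dinaturality, Codiagonal and Uniformity (for tame morphisms, which are
linear) on an idempotent grove category with coproducts, the derived Kleene
iteration `p⋆ := (inl + p;inr)†` satisfies `⋆-Uni`: if `u;p = q;u` with `u`
tame, then `u;p⋆ = q⋆;u`. -/
theorem elgot_to_kleene_uni {C : Type*} [Category C] [Grove C]
    [HasBinaryCoproducts C]
    (Tame : ∀ X Y : C, Set (X ⟶ Y))
    (htame_lin : ∀ {X Y : C} (u : X ⟶ Y), u ∈ Tame X Y → Linear u)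
    (elg : ∀ {X Y : C}, (X ⟶ Y ⨿ X) → (X ⟶ Y))
    -- Naturality
    (hnat : ∀ {X Y Z : C} (p : X ⟶ Y ⨿ X) (q : Y ⟶ Z),
      elg p ≫ q = elg (p ≫ coprod.map q (𝟙 X)))
    -- Fixpoint
    (hfix : ∀ {X Y : C} (p : X ⟶ Y ⨿ X),
      p ≫ coprod.desc (𝟙 Y) (elg p) = elg p)
    -- Dinaturality
    (hdinat : ∀ {X Y Z : C} (p : X ⟶ Y ⨿ Z) (q : Z ⟶ Y ⨿ X),
      elg (p ≫ coprod.desc coprod.inl q) =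
        p ≫ coprod.desc (𝟙 Y) (elg (q ≫ coprod.desc coprod.inl p)))
    -- Codiagonal
    (hcodiag : ∀ {X Y : C} (p : X ⟶ (Y ⨿ X) ⨿ X),
      elg (p ≫ coprod.desc (𝟙 (Y ⨿ X)) coprod.inr) = elg (elg p))
    -- Uniformity for tame u
    (huni : ∀ {X Z Y : C} (u : X ⟶ Z), u ∈ Tame X Z →
      ∀ (g : Z ⟶ Y ⨿ Z) (f : X ⟶ Y ⨿ X),
        u ≫ g = f ≫ coprod.map (𝟙 Y) u → u ≫ elg g = elg f)
    {X Y : C} (u : X ⟶ Y) (p : Y ⟶ Y) (q : X ⟶ X)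
    (hu : u ∈ Tame X Y) (hcomm : u ≫ p = q ≫ u) :
    u ≫ elg (Grove.gadd (coprod.inl : Y ⟶ Y ⨿ Y) (p ≫ coprod.inr)) =
      elg (Grove.gadd (coprod.inl : X ⟶ X ⨿ X) (q ≫ coprod.inr)) ≫ u := by
  obtain ⟨_, hdist⟩ := htame_lin u hu
  have h1 : u ≫ elg (Grove.gadd (coprod.inl : Y ⟶ Y ⨿ Y) (p ≫ coprod.inr)) =
      elg (Grove.gadd (u ≫ coprod.inl) (q ≫ coprod.inr)) := by
    apply huni u hu
    rw [hdist, Grove.gadd_comp]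
    congr 1
    · simp
    · rw [← Category.assoc, hcomm]; simp
  have h2 : elg (Grove.gadd (coprod.inl : X ⟶ X ⨿ X) (q ≫ coprod.inr)) ≫ u =
      elg (Grove.gadd (u ≫ coprod.inl) (q ≫ coprod.inr)) := by
    rw [hnat, Grove.gadd_comp]
    congr 2 <;> simp
  rw [h1, h2]
end

section
/- In an idempotent grove monoid with tests and Kleene iteration satisfying ⋆-Fix, ⋆-Sum, and ⋆-Uni with tests tame, the while-loop composition law TW-Or holds: while (b ∨ c) do p = (while b do p);(while c do (p ; while b do p)), where while b do p := (b;p)⋆;b̄ and b ∨ c := b + c. -/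
/-- TW-Or: in an idempotent grove monoid with tests (tame, linear,
complemented, commuting, idempotent) and Kleene iteration satisfying
`⋆-Fix`, `⋆-Sum` and `⋆-Uni` with tests tame, the while-loop composition law
`while (b ∨ c) do p = (while b do p) ; (while c do (p ; while b do p))`
holds, where `while b do p := (b*p)⋆ * b̄` and `b ∨ c := b + c` has
complement `b̄ * c̄`. -/
theorem tw_or {S : Type*} [Monoid S] [AddCommMonoid S]
    (hadd_idem : ∀ a : S, a + a = a)
    (hzero_mul : ∀ p : S, (0 : S) * p = 0)
    (hadd_mul : ∀ q r p : S, (q + r) * p = q * p + r * p)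
    (Tame : Set S)
    (htame_strict : ∀ u ∈ Tame, u * 0 = 0)
    (htame_dist : ∀ u ∈ Tame, ∀ q r : S, u * (q + r) = u * q + u * r)
    (star : S → S)
    (hfix : ∀ p : S, star p = 1 + p * star p)
    (hsum : ∀ p q : S, star (p + q) = star p * star (q * star p))
    (huni : ∀ u ∈ Tame, ∀ p q : S, u * p = q * u → u * star p = star q * u)
    (b bb c cc : S)
    -- tests are tame (hence linear)
    (hbT : b ∈ Tame) (hbbT : bb ∈ Tame) (hcT : c ∈ Tame) (hccT : cc ∈ Tame)
    -- complements
    (hb_contra : b * bb = 0) (hb_contra' : bb * b = 0) (hb_em : b + bb = 1)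
    (hc_contra : c * cc = 0) (hc_contra' : cc * c = 0) (hc_em : c + cc = 1)
    -- idempotence and commutation of tests
    (hb_idem : b * b = b) (hc_idem : c * c = c)
    (hbc : b * c = c * b) (hbcc : b * cc = cc * b)
    (hbbc : bb * c = c * bb) (hbbcc : bb * cc = cc * bb)
    (p : S) :
    star ((b + c) * p) * (bb * cc) =
      (star (b * p) * bb) * (star (c * (p * (star (b * p) * bb))) * cc) := by
  have h1c : (1 : S) + c = 1 := by
    calc (1 : S) + c = c + cc + c := by rw [hc_em]
      _ = c + c + cc := by rw [add_assoc, add_comm cc c, ← add_assoc]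
      _ = c + cc := by rw [hadd_idem]
      _ = 1 := hc_em
  have hb1 : b + b * c = b := by
    calc b + b * c = b * 1 + b * c := by rw [mul_one]
      _ = b * (1 + c) := (htame_dist b hbT 1 c).symm
      _ = b * 1 := by rw [h1c]
      _ = b := mul_one b
  have hbplusc : b + c = b + bb * c := by
    calc b + c = b + 1 * c := by rw [one_mul]
      _ = b + (b + bb) * c := by rw [hb_em]
      _ = b + (b * c + bb * c) := by rw [hadd_mul]
      _ = (b + b * c) + bb * c := by rw [add_assoc]
      _ = b + bb * c := by rw [hb1]
  have key : star ((b + c) * p) = star (b * p) * star (bb * (c * p) * star (b * p)) := by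
    rw [hbplusc, hadd_mul, mul_assoc bb c p, hsum]
  have huni' : bb * star (c * (p * (star (b * p) * bb))) =
      star (bb * (c * p) * star (b * p)) * bb := by
    apply huni bb hbbT
    simp [mul_assoc]
  calc star ((b + c) * p) * (bb * cc)
      = star (b * p) * (star (bb * (c * p) * star (b * p)) * bb * cc) := by
        rw [key]; simp [mul_assoc]
    _ = star (b * p) * (bb * star (c * (p * (star (b * p) * bb))) * cc) := by
        rw [← huni']
    _ = (star (b * p) * bb) * (star (c * (p * (star (b * p) * bb))) * cc) := by
        simp [mul_assoc]
end

section
/- In an idempotent grove monoid with tests and a while-operator satisfying TW-Fix (while b do p = b;p;(while b do p) + b̄) and TW-Uni (from u;b̄ = c̄;v and u;b;p = c;q;u conclude u;(while b do p) = (while c do q);v, for tame u,v), the guard-absorption identities hold: (1) b̄;(while (b∧c) do p) = b̄, and (2) while (b∧c) do p = while (b∧c) do (b;p). -/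
/-- Guard-absorption for while-loops: in an idempotent grove monoid with
tests (a set `T` with complement operation `compl`, tests being tame, linear,
idempotent, complemented) and a while-operator `W` satisfying
TW-Fix (`W a p = a*p*(W a p) + ā`) and
TW-Uni (`u*ā = c̄*v → u*(a*p) = (c*q)*u → u*(W a p) = (W c q)*v` for tame
`u`, `v`), one has, for tests `b`, `c` with `b∧c = b*c` and
`compl (b*c) = b̄ + c̄`:
(1) `b̄ * (W (b*c) p) = b̄`, and (2) `W (b*c) p = W (b*c) (b*p)`. -/
theorem while_guard_absorption {S : Type*} [Monoid S] [AddCommMonoid S]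
    (hadd_idem : ∀ a : S, a + a = a)
    (hzero_mul : ∀ p : S, (0 : S) * p = 0)
    (hadd_mul : ∀ q r p : S, (q + r) * p = q * p + r * p)
    (Tame : Set S)
    (htame_strict : ∀ u ∈ Tame, u * 0 = 0)
    (htame_dist : ∀ u ∈ Tame, ∀ q r : S, u * (q + r) = u * q + u * r)
    (hone_tame : (1 : S) ∈ Tame)
    (T : Set S) (compl : S → S)
    -- tests are tame, complemented, idempotent
    (htest_tame : ∀ a ∈ T, a ∈ Tame)
    (hcompl_mem : ∀ a ∈ T, compl a ∈ T)
    (hcontra : ∀ a ∈ T, a * compl a = 0)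
    (hcontra' : ∀ a ∈ T, compl a * a = 0)
    (hem : ∀ a ∈ T, a + compl a = 1)
    (hidem : ∀ a ∈ T, a * a = a)
    -- the while operator and its laws
    (W : S → S → S)
    (htwfix : ∀ a ∈ T, ∀ p : S, W a p = a * p * W a p + compl a)
    (htwuni : ∀ a ∈ T, ∀ c ∈ T, ∀ u ∈ Tame, ∀ v ∈ Tame, ∀ p q : S,
      u * compl a = compl c * v → u * (a * p) = (c * q) * u →
        u * W a p = W c q * v)
    -- the tests b, c and the conjunction b∧c = b*c
    (b c : S) (hb : b ∈ T) (hc : c ∈ T) (hbc_mem : b * c ∈ T)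
    (hbc_compl : compl (b * c) = compl b + compl c)
    (hcomm : b * c = c * b)
    (p : S) :
    compl b * W (b * c) p = compl b ∧ W (b * c) p = W (b * c) (b * p) := by
  have hbT := htest_tame _ (hcompl_mem b hb)
  -- b̄ * compl (b*c) = b̄
  have key : compl b * compl (b * c) = compl b := by
    have h1 : compl b * (b * c + compl (b * c)) = compl b := by
      rw [hem _ hbc_mem, mul_one]
    rw [htame_dist _ hbT] at h1
    have h2 : compl b * (b * c) = 0 := by
      rw [← mul_assoc, hcontra' b hb, hzero_mul]
    rwa [h2, zero_add] at h1
  constructor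
  · conv_lhs => rw [htwfix _ hbc_mem]
    rw [htame_dist _ hbT, key]
    have h2 : compl b * (b * c * p * W (b * c) p) = 0 := by
      rw [← mul_assoc, ← mul_assoc, ← mul_assoc, hcontra' b hb,
        hzero_mul, hzero_mul, hzero_mul]
    rw [h2, zero_add]
  · have h := htwuni _ hbc_mem _ hbc_mem 1 hone_tame 1 hone_tame p (b * p)
      (by rw [one_mul, mul_one]) ?_
    · rwa [one_mul, mul_one] at h
    · rw [one_mul, mul_one]
      have : b * c * b = b * c := by
        rw [mul_assoc, ← hcomm, ← mul_assoc, hidem b hb]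
      rw [← mul_assoc, this]
end
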